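/- For any address α with nonempty first coordinate and index 2 ≤ d ≤ n, the baker's map satisfies B_d(α) = ⟨α.01₁, α.10₁⟩ ∘ B_d(α.0₁) ∘ B_d(α.1₁) as homeomorphisms of 𝔠ⁿ, where juxtaposition denotes composition and the factors on the right have pairwise disjoint supports except as forced by the formula. -/

import Mathlib

open scoped Classical

/-- Finite words over the alphabet `{0,1}`. -/
abbrev Word := List Bool
/-- Cantor space: infinite `{0,1}`-sequences. -/
abbrev Cantor := ℕ → Bool

/-- Concatenate a finite word with an infinite sequence. -/
def catW (α : Word) (w : Cantor) : Cantor :=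
  fun i => if h : i < α.length then α.get ⟨i, h⟩ else w (i - α.length)

/-- The basic open set of sequences having `α` as a prefix. -/
def GammaW (α : Word) : Set Cantor := Set.range (catW α)

/-- Incomparability of words: neither is a prefix of the other. -/
def IncompW (α β : Word) : Prop := ¬ α <+: β ∧ ¬ β <+: α

/-- Addresses: `n`-tuples of finite words. -/
abbrev Addr (n : ℕ) := Fin n → Word
/-- `n`-dimensional Cantor space. -/
abbrev CantorN (n : ℕ) := Fin n → Cantor

/-- The basic open set in `𝔠ⁿ` indexed by the address `α`. -/
def GammaN {n : ℕ} (α : Addr n) : Set (CantorN n) :=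
  { w | ∀ d, w d ∈ GammaW (α d) }

/-- Incomparability of addresses: some coordinate pair is incomparable. -/
def IncompA {n : ℕ} (α β : Addr n) : Prop := ∃ d, IncompW (α d) (β d)

/-- Drop the first `k` symbols of an infinite sequence. -/
def dropSeq (k : ℕ) (w : Cantor) : Cantor := fun i => w (i + k)

/-- Prepend the address `α` coordinatewise. -/
def catA {n : ℕ} (α : Addr n) (u : CantorN n) : CantorN n :=
  fun d => catW (α d) (u d)

/-- Remove the prefix `α` coordinatewise. -/
def dropA {n : ℕ} (α : Addr n) (w : CantorN n) : CantorN n :=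
  fun d => dropSeq ((α d).length) (w d)

/-- The transposition `⟨α β⟩` of `𝔠ⁿ`: exchanges `Γ(α)` and `Γ(β)` by prefix
substitution and fixes all other points. -/
noncomputable def swapN {n : ℕ} (α β : Addr n) : CantorN n → CantorN n :=
  fun w =>
    if w ∈ GammaN α then catA β (dropA α w)
    else if w ∈ GammaN β then catA α (dropA β w)
    else w

/-- Append the symbol `x` to the `d`-th coordinate of the address `α`. -/
def appA {n : ℕ} (α : Addr n) (d : Fin n) (x : Bool) : Addr n :=
  Function.update α d (α d ++ [x])

/-- Append the word `u` to the `d`-th coordinate of the address `α`. -/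
def appW {n : ℕ} (α : Addr n) (d : Fin n) (u : Word) : Addr n :=
  Function.update α d (α d ++ u)

/-- Coordinatewise concatenation of addresses. -/
def concatA {n : ℕ} (α η : Addr n) : Addr n := fun d => α d ++ η d

/-- The address with word `u` in coordinate `d` and empty words elsewhere. -/
def unitA {n : ℕ} (d : Fin n) (u : Word) : Addr n :=
  fun e => if e = d then u else []

/-- Prepend a letter to an infinite sequence. -/
def consSeq (b : Bool) (w : Cantor) : Cantor :=
  fun i => match i with
  | 0 => b
  | i + 1 => w i

/-- The full-support baker's map: moves the first letter of coordinate `1`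
to the front of coordinate `d`. -/
def bakerFull {n : ℕ} [NeZero n] (d : Fin n) : CantorN n → CantorN n :=
  fun w e =>
    if e = 0 then dropSeq 1 (w 0)
    else if e = d then consSeq (w 0 0) (w d)
    else w e

/-- The inverse of the full-support baker's map: moves the first letter of
coordinate `d` to the front of coordinate `1`. -/
def invBakerFull {n : ℕ} [NeZero n] (d : Fin n) : CantorN n → CantorN n :=
  fun w e =>
    if e = 0 then consSeq (w d 0) (w 0)
    else if e = d then dropSeq 1 (w d)
    else w e

/-- The index-`d` baker's map with support `Γ(α)`: sends `α.x₁.u ↦ α.x_d.u`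
and fixes all points outside `Γ(α)`. -/
noncomputable def bakerN {n : ℕ} [NeZero n] (d : Fin n) (α : Addr n) :
    CantorN n → CantorN n :=
  fun w => if w ∈ GammaN α then catA α (bakerFull d (dropA α w)) else w

/-- The inverse of the index-`d` baker's map with support `Γ(α)`. -/
noncomputable def invBakerN {n : ℕ} [NeZero n] (d : Fin n) (α : Addr n) :
    CantorN n → CantorN n :=
  fun w => if w ∈ GammaN α then catA α (invBakerFull d (dropA α w)) else w

/-- The partial prefix-substitution action of the symbol `⟨γ δ⟩` on addresses,
as a relation: `ActRel γ δ ζ ζ'` holds iff `ζ • ⟨γ δ⟩` is defined and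
equals `ζ'`. -/
def ActRel {n : ℕ} (γ δ ζ ζ' : Addr n) : Prop :=
  (∃ η, ζ = concatA γ η ∧ ζ' = concatA δ η) ∨
  (∃ η, ζ = concatA δ η ∧ ζ' = concatA γ η) ∨
  (IncompA ζ γ ∧ IncompA ζ δ ∧ ζ' = ζ)

/-!
All maps in the formula are supported in `Γ(α)` and commute with prefixing by `α`, so it
suffices to treat `α = ∅`, where `B_d(∅)` sends `(a.b.t, u_d) ↦ (b.t, a.u_d)`. There the
transposition `⟨01₁, 10₁⟩` simply exchanges the first two letters `a, b` of the first
coordinate, after which exactly one of `B_d(0₁)`, `B_d(1₁)` acts, namely the one whose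
letter is `b`: it keeps `b` in front and moves the next letter `a` to coordinate `d`.
-/

open Function

section Words

lemma consSeq_head_dropSeq_one (w : Cantor) : consSeq (w 0) (dropSeq 1 w) = w := by
  funext i; cases i <;> rfl

lemma consSeq_inj {a b : Bool} {v w : Cantor} : consSeq a v = consSeq b w ↔ a = b ∧ v = w :=
  ⟨fun h => ⟨congrFun h 0, congrArg (dropSeq 1) h⟩, fun ⟨ha, hv⟩ => ha ▸ hv ▸ rfl⟩

lemma catW_nil (w : Cantor) : catW [] w = w := rfl

lemma catW_cons (x : Bool) (s : Word) (w : Cantor) :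
    catW (x :: s) w = consSeq x (catW s w) := by
  funext i; cases i <;> simp [catW, consSeq]

lemma catW_singleton (x : Bool) (w : Cantor) : catW [x] w = consSeq x w :=
  catW_cons x [] w

lemma catW_append (a b : Word) (w : Cantor) : catW (a ++ b) w = catW a (catW b w) := by
  induction a with
  | nil => rfl
  | cons x a ih => rw [List.cons_append, catW_cons, catW_cons, ih]

lemma dropSeq_catW (a : Word) (w : Cantor) : dropSeq a.length (catW a w) = w := by
  funext i
  simp only [dropSeq, catW, dif_neg (Nat.not_lt.mpr (Nat.le_add_left _ i)), Nat.add_sub_cancel]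

lemma dropSeq_dropSeq (k m : ℕ) (w : Cantor) :
    dropSeq k (dropSeq m w) = dropSeq (m + k) w := by
  funext i; simp only [dropSeq, Nat.add_comm m k, Nat.add_assoc]

lemma GammaW_nil : GammaW [] = Set.univ := Set.range_id

lemma consSeq_mem_GammaW_cons (a x : Bool) (v : Cantor) (s : Word) :
    consSeq a v ∈ GammaW (x :: s) ↔ a = x ∧ v ∈ GammaW s := by
  simp only [GammaW, Set.mem_range, catW_cons, consSeq_inj]
  exact ⟨fun ⟨u, hx, hu⟩ => ⟨hx.symm, u, hu⟩,
    fun ⟨hx, u, hu⟩ => ⟨u, hx.symm, hu⟩⟩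

lemma mem_GammaW_singleton (b : Bool) (w : Cantor) : w ∈ GammaW [b] ↔ w 0 = b := by
  rw [← consSeq_head_dropSeq_one w, consSeq_mem_GammaW_cons, GammaW_nil]
  simp only [Set.mem_univ, and_true]
  rfl

lemma catW_mem_GammaW_append (a s : Word) (v : Cantor) :
    catW a v ∈ GammaW (a ++ s) ↔ v ∈ GammaW s := by
  induction a with
  | nil => rfl
  | cons x a ih => simp only [List.cons_append, catW_cons, consSeq_mem_GammaW_cons, true_and, ih]

end Words

section Addresses

variable {n : ℕ}

lemma mem_GammaN_iff (α : Addr n) (w : CantorN n) : w ∈ GammaN α ↔ ∃ u, catA α u = w := by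
  constructor
  · intro h
    choose u hu using h
    exact ⟨u, funext hu⟩
  · rintro ⟨u, rfl⟩ e
    exact ⟨u e, rfl⟩

lemma dropA_catA (α : Addr n) (u : CantorN n) : dropA α (catA α u) = u :=
  funext fun e => dropSeq_catW (α e) (u e)

lemma catA_concatA (α β : Addr n) (u : CantorN n) :
    catA (concatA α β) u = catA α (catA β u) :=
  funext fun e => catW_append (α e) (β e) (u e)

lemma catA_mem_GammaN_concatA (α β : Addr n) (u : CantorN n) :
    catA α u ∈ GammaN (concatA α β) ↔ u ∈ GammaN β :=
  forall_congr' fun e => catW_mem_GammaW_append (α e) (β e) (u e)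

lemma dropA_concatA_catA (α β : Addr n) (u : CantorN n) :
    dropA (concatA α β) (catA α u) = dropA β u := by
  funext e
  simp only [dropA, concatA, catA, List.length_append, ← dropSeq_dropSeq, dropSeq_catW]

lemma GammaN_concatA_subset (α β : Addr n) : GammaN (concatA α β) ⊆ GammaN α := by
  intro w hw
  obtain ⟨u, rfl⟩ := (mem_GammaN_iff _ w).mp hw
  rw [catA_concatA]
  exact (mem_GammaN_iff α _).mpr ⟨_, rfl⟩

lemma bakerN_catA [NeZero n] (d : Fin n) (α : Addr n) (u : CantorN n) :
    bakerN d α (catA α u) = catA α (bakerFull d u) := by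
  rw [bakerN, if_pos ((mem_GammaN_iff α _).mpr ⟨u, rfl⟩), dropA_catA]

lemma bakerN_of_notMem [NeZero n] (d : Fin n) {α : Addr n} {w : CantorN n}
    (hw : w ∉ GammaN α) : bakerN d α w = w :=
  if_neg hw

lemma bakerN_concatA_catA [NeZero n] (d : Fin n) (α β : Addr n) (u : CantorN n) :
    bakerN d (concatA α β) (catA α u) = catA α (bakerN d β u) := by
  unfold bakerN
  simp only [catA_mem_GammaN_concatA, dropA_concatA_catA, catA_concatA]
  split_ifs <;> rfl

lemma swapN_catA_left (α β : Addr n) (u : CantorN n) : swapN α β (catA α u) = catA β u := by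
  rw [swapN, if_pos ((mem_GammaN_iff α _).mpr ⟨u, rfl⟩), dropA_catA]

lemma swapN_catA_right {α β : Addr n} {u : CantorN n} (h : catA β u ∉ GammaN α) :
    swapN α β (catA β u) = catA α u := by
  rw [swapN, if_neg h, if_pos ((mem_GammaN_iff β _).mpr ⟨u, rfl⟩), dropA_catA]

lemma swapN_of_notMem {α β : Addr n} {w : CantorN n} (hα : w ∉ GammaN α)
    (hβ : w ∉ GammaN β) : swapN α β w = w := by
  rw [swapN, if_neg hα, if_neg hβ]

lemma swapN_concatA_catA (α β γ : Addr n) (u : CantorN n) :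
    swapN (concatA α β) (concatA α γ) (catA α u) = catA α (swapN β γ u) := by
  unfold swapN
  simp only [catA_mem_GammaN_concatA, dropA_concatA_catA, catA_concatA]
  split_ifs <;> rfl

lemma appW_eq_concatA_unitA (α : Addr n) (c : Fin n) (s : Word) :
    appW α c s = concatA α (unitA c s) := by
  funext e
  by_cases he : e = c
  · subst he; simp [appW, concatA, unitA]
  · simp [appW, concatA, unitA, he]

lemma appA_eq_concatA_unitA (α : Addr n) (c : Fin n) (x : Bool) :
    appA α c x = concatA α (unitA c [x]) :=
  appW_eq_concatA_unitA α c [x]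

lemma catA_unitA_update (c : Fin n) (s : Word) (v : CantorN n) (w : Cantor) :
    catA (unitA c s) (update v c w) = update v c (catW s w) := by
  funext e
  by_cases he : e = c
  · subst he; simp [catA, unitA]
  · simp [catA, unitA, he, catW_nil]

lemma mem_GammaN_unitA (c : Fin n) (s : Word) (v : CantorN n) :
    v ∈ GammaN (unitA c s) ↔ v c ∈ GammaW s := by
  refine ⟨fun h => by simpa [unitA] using h c, fun h e => ?_⟩
  by_cases he : e = c
  · subst he; simpa [unitA] using h
  · simp [unitA, he, GammaW_nil]

lemma swapN_unitA_consSeq (c : Fin n) (v : CantorN n) (a b : Bool) (t : Cantor) :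
    swapN (unitA c [false, true]) (unitA c [true, false]) (update v c (consSeq a (consSeq b t))) =
      update v c (consSeq b (consSeq a t)) := by
  have hcat : ∀ x y,
      update v c (consSeq x (consSeq y t)) = catA (unitA c [x, y]) (update v c t) :=
    fun x y => by rw [catA_unitA_update, catW_cons, catW_singleton]
  have hmem : ∀ x y,
      update v c (consSeq a (consSeq b t)) ∈ GammaN (unitA c [x, y]) ↔ a = x ∧ b = y := by
    intro x y
    simp [mem_GammaN_unitA, consSeq_mem_GammaW_cons, GammaW_nil]
  cases a <;> cases b
  · exact swapN_of_notMem (by simp [hmem]) (by simp [hmem])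
  · rw [hcat, swapN_catA_left, ← hcat]
  · rw [hcat, swapN_catA_right (by simp [← hcat, hmem]), ← hcat]
  · exact swapN_of_notMem (by simp [hmem]) (by simp [hmem])

end Addresses

section FirstCoordinate

variable {n : ℕ} [NeZero n] {d : Fin n}

lemma bakerFull_update_zero (hd : d ≠ 0) (v : CantorN n) (w : Cantor) :
    bakerFull d (update v 0 w) = update (update v 0 (dropSeq 1 w)) d (consSeq (w 0) (v d)) := by
  funext e
  by_cases he : e = 0
  · subst he; simp [bakerFull, hd.symm]
  · by_cases hed : e = d
    · subst hed; simp [bakerFull, he]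
    · simp [bakerFull, he, hed]

lemma bakerN_unitA_singleton (hd : d ≠ 0) (b : Bool) (v : CantorN n) (w : Cantor) :
    bakerN d (unitA 0 [b]) (update v 0 (consSeq b w)) =
      update (update v 0 (consSeq b (dropSeq 1 w))) d (consSeq (w 0) (v d)) := by
  rw [← catW_singleton, ← catA_unitA_update, bakerN_catA, bakerFull_update_zero hd,
    update_comm hd.symm, catA_unitA_update, catW_singleton, update_comm hd]

lemma bakerN_unitA_singleton_of_ne (d : Fin n) {b : Bool} {v : CantorN n} (h : v 0 0 ≠ b) :
    bakerN d (unitA 0 [b]) v = v :=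
  bakerN_of_notMem d <| by rwa [mem_GammaN_unitA, mem_GammaW_singleton]

lemma bakerFull_eq_comp (hd : d ≠ 0) :
    bakerFull d = bakerN d (unitA 0 [true]) ∘ bakerN d (unitA 0 [false]) ∘
      swapN (unitA 0 [false, true]) (unitA 0 [true, false]) := by
  funext u
  obtain ⟨a, b, t, hu⟩ : ∃ a b t, update u 0 (consSeq a (consSeq b t)) = u :=
    ⟨u 0 0, dropSeq 1 (u 0) 0, dropSeq 1 (dropSeq 1 (u 0)), by
      rw [consSeq_head_dropSeq_one, consSeq_head_dropSeq_one, update_eq_self]⟩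
  rw [← hu, comp_apply, comp_apply, swapN_unitA_consSeq, bakerFull_update_zero hd]
  cases b
  · rw [bakerN_unitA_singleton hd, bakerN_unitA_singleton_of_ne d (by simp [hd.symm, consSeq])]
    rfl
  · rw [bakerN_unitA_singleton_of_ne (b := false) d (by simp [consSeq]),
      bakerN_unitA_singleton hd]
    rfl

end FirstCoordinate

theorem stmt10_general (n : ℕ) [NeZero n] (d : Fin n) (hd : d ≠ 0)
    (α : Addr n) :
    bakerN d α =
      bakerN d (appA α 0 true) ∘ bakerN d (appA α 0 false) ∘
        swapN (appW α 0 [false, true]) (appW α 0 [true, false]) := by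
  simp only [appA_eq_concatA_unitA, appW_eq_concatA_unitA]
  funext w
  by_cases hw : w ∈ GammaN α
  · obtain ⟨u, rfl⟩ := (mem_GammaN_iff α w).mp hw
    rw [comp_apply, comp_apply, swapN_concatA_catA, bakerN_concatA_catA, bakerN_concatA_catA,
      bakerN_catA, bakerFull_eq_comp hd, comp_apply, comp_apply]
  · have hw' : ∀ β, w ∉ GammaN (concatA α β) := fun β h =>
      hw (GammaN_concatA_subset α β h)
    rw [comp_apply, comp_apply, swapN_of_notMem (hw' _) (hw' _), bakerN_of_notMem d (hw' _),
      bakerN_of_notMem d (hw' _), bakerN_of_notMem d hw]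

/-- The split formula for baker's maps in the first coordinate:
`B_d(α) = ⟨α.01₁, α.10₁⟩ ; B_d(α.0₁) ; B_d(α.1₁)` (factors applied left to
right). -/
theorem stmt10 (n : ℕ) [NeZero n] (hn : 2 ≤ n) (d : Fin n) (hd : d ≠ 0)
    (α : Addr n) (hα : α 0 ≠ ([] : Word)) :
    bakerN d α =
      bakerN d (appA α 0 true) ∘ bakerN d (appA α 0 false) ∘
        swapN (appW α 0 [false, true]) (appW α 0 [true, false]) :=
  stmt10_general n d hd α
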